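/- arXiv:2303.06646 — 2 statements merged into one kernel-verified Lean document; each statement's English description precedes it below -/
import Mathlib

section
/- Let (M, E) be an exact category and 𝒫 a full additive subcategory of M which is strongly covariantly finite. Then for any morphism f : X → Y in M there exist an object Q ∈ 𝒫 and a conflation 0 → X → Y ⊕ Q → Z → 0 (whose inflation has components f and −α for some 𝒫-preenvelope α : X → Q) which is Hom(−,𝒫)-exact. -/
open CategoryTheory CategoryTheory.Limits

universe v u

namespace PaperQEC

section QuotientCategory

variable {C : Type u} [Category.{v} C] [Preadditive C]

/-- `f` factors through an object belonging to `P`. -/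
def FactorsThru (P : Set C) {X Y : C} (f : X ⟶ Y) : Prop :=
  ∃ Z ∈ P, ∃ (g : X ⟶ Z) (h : Z ⟶ Y), g ≫ h = f

/-- The subgroup of `Hom(X, Y)` generated by morphisms factoring through an object of `P`
(for `P` closed under finite sums this is just the set of such morphisms). -/
def factorIdeal (P : Set C) (X Y : C) : AddSubgroup (X ⟶ Y) :=
  AddSubgroup.closure {f | FactorsThru P f}

lemma factorIdeal_comp_left (P : Set C) {X Y Z : C} {f : X ⟶ Y}
    (hf : f ∈ factorIdeal P X Y) (g : Y ⟶ Z) : f ≫ g ∈ factorIdeal P X Z := by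
  have h : factorIdeal P X Y ≤
      (factorIdeal P X Z).comap (AddMonoidHom.mk' (fun u : X ⟶ Y => u ≫ g)
        (fun a b => Preadditive.add_comp _ _ _ _ _ _)) := by
    refine (AddSubgroup.closure_le _).mpr ?_
    rintro u ⟨Zp, hZp, a, b, rfl⟩
    exact AddSubgroup.mem_comap.mpr
      (AddSubgroup.subset_closure ⟨Zp, hZp, a, b ≫ g, (Category.assoc _ _ _).symm⟩)
  exact h hf

lemma factorIdeal_comp_right (P : Set C) {X Y Z : C} (f : X ⟶ Y) {g : Y ⟶ Z}
    (hg : g ∈ factorIdeal P Y Z) : f ≫ g ∈ factorIdeal P X Z := by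
  have h : factorIdeal P Y Z ≤
      (factorIdeal P X Z).comap (AddMonoidHom.mk' (fun u : Y ⟶ Z => f ≫ u)
        (fun a b => Preadditive.comp_add _ _ _ _ _ _)) := by
    refine (AddSubgroup.closure_le _).mpr ?_
    rintro u ⟨Zp, hZp, a, b, rfl⟩
    exact AddSubgroup.mem_comap.mpr
      (AddSubgroup.subset_closure ⟨Zp, hZp, f ≫ a, b, Category.assoc _ _ _⟩)
  exact h hg

/-- Objects of the quotient (stable) category `C / P`. -/
structure QuotObj (P : Set C) : Type u where
  obj : C

variable (P : Set C)

instance quotCategory : Category.{v} (QuotObj P) where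
  Hom A B := (A.obj ⟶ B.obj) ⧸ factorIdeal P A.obj B.obj
  id A := QuotientAddGroup.mk (𝟙 A.obj)
  comp {A B D} f g :=
    Quotient.liftOn₂ f g (fun a b => QuotientAddGroup.mk (a ≫ b)) (by
      intro a₁ b₁ a₂ b₂ ha hb
      have ha' : -a₁ + a₂ ∈ factorIdeal P A.obj B.obj := QuotientAddGroup.leftRel_apply.mp ha
      have hb' : -b₁ + b₂ ∈ factorIdeal P B.obj D.obj := QuotientAddGroup.leftRel_apply.mp hb
      refine (QuotientAddGroup.eq (s := factorIdeal P A.obj D.obj)).mpr ?_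
      have h1 : (-a₁ + a₂) ≫ b₁ ∈ factorIdeal P A.obj D.obj :=
        factorIdeal_comp_left P ha' b₁
      have h2 : a₂ ≫ (-b₁ + b₂) ∈ factorIdeal P A.obj D.obj :=
        factorIdeal_comp_right P a₂ hb'
      have h3 := AddSubgroup.add_mem _ h1 h2
      have heq : -(a₁ ≫ b₁) + a₂ ≫ b₂ = (-a₁ + a₂) ≫ b₁ + a₂ ≫ (-b₁ + b₂) := by
        simp only [Preadditive.add_comp, Preadditive.comp_add, Preadditive.neg_comp,
          Preadditive.comp_neg]
        abel
      rw [heq]; exact h3)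
  id_comp {A B} f := by
    induction f using Quotient.inductionOn with
    | h a => exact congrArg QuotientAddGroup.mk (Category.id_comp a)
  comp_id {A B} f := by
    induction f using Quotient.inductionOn with
    | h a => exact congrArg QuotientAddGroup.mk (Category.comp_id a)
  assoc {A B D E} f g h := by
    induction f using Quotient.inductionOn with
    | h a =>
    induction g using Quotient.inductionOn with
    | h b =>
    induction h using Quotient.inductionOn with
    | h c => exact congrArg QuotientAddGroup.mk (Category.assoc a b c)

/-- The image in the quotient category of a morphism of `C`. -/
def qmap {X Y : C} (f : X ⟶ Y) : (QuotObj.mk X : QuotObj P) ⟶ QuotObj.mk Y :=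
  QuotientAddGroup.mk f

instance quotPreadditive : Preadditive (QuotObj P) where
  homGroup A B :=
    inferInstanceAs (AddCommGroup ((A.obj ⟶ B.obj) ⧸ factorIdeal P A.obj B.obj))
  add_comp A B D f f' g := by
    induction f using Quotient.inductionOn with
    | h a =>
    induction f' using Quotient.inductionOn with
    | h a' =>
    induction g using Quotient.inductionOn with
    | h b =>
      show QuotientAddGroup.mk ((a + a') ≫ b) =
        QuotientAddGroup.mk (a ≫ b) + QuotientAddGroup.mk (a' ≫ b)
      rw [Preadditive.add_comp]
      rfl
  comp_add A B D f g g' := by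
    induction f using Quotient.inductionOn with
    | h a =>
    induction g using Quotient.inductionOn with
    | h b =>
    induction g' using Quotient.inductionOn with
    | h b' =>
      show QuotientAddGroup.mk (a ≫ (b + b')) =
        QuotientAddGroup.mk (a ≫ b) + QuotientAddGroup.mk (a ≫ b')
      rw [Preadditive.comp_add]
      rfl

end QuotientCategory

section Exact

variable {C : Type u} [Category.{v} C] [Preadditive C]

/-- `k` is a kernel of `f`. -/
def IsKernelOf {K X Y : C} (k : K ⟶ X) (f : X ⟶ Y) : Prop :=
  k ≫ f = 0 ∧ ∀ {T : C} (g : T ⟶ X), g ≫ f = 0 → ∃! t : T ⟶ K, t ≫ k = g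

/-- `c` is a cokernel of `f`. -/
def IsCokernelOf {X Y Q : C} (c : Y ⟶ Q) (f : X ⟶ Y) : Prop :=
  f ≫ c = 0 ∧ ∀ {T : C} (g : Y ⟶ T), f ≫ g = 0 → ∃! t : Q ⟶ T, c ≫ t = g

/-- A class of composable pairs of morphisms (the prospective conflations). -/
abbrev ConfClass (D : Type*) [Category D] :=
  ∀ ⦃X Y Z : D⦄, (X ⟶ Y) → (Y ⟶ Z) → Prop

/-- A Quillen exact structure on an additive category: a class of kernel–cokernel pairs
(conflations), closed under isomorphisms, containing the identities as inflations and
deflations, with inflations and deflations closed under composition, pushouts of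
inflations and pullbacks of deflations existing and being inflations resp. deflations. -/
structure ExactStructure (D : Type u) [Category.{v} D] [Preadditive D] where
  conf : ConfClass D
  ker_of_conf : ∀ {X Y Z : D} {i : X ⟶ Y} {d : Y ⟶ Z}, conf i d → IsKernelOf i d
  coker_of_conf : ∀ {X Y Z : D} {i : X ⟶ Y} {d : Y ⟶ Z}, conf i d → IsCokernelOf d i
  isoClosed : ∀ {X Y Z X' Y' Z' : D} {i : X ⟶ Y} {d : Y ⟶ Z} {i' : X' ⟶ Y'} {d' : Y' ⟶ Z'}
    (eX : X ≅ X') (eY : Y ≅ Y') (eZ : Z ≅ Z'),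
    i ≫ eY.hom = eX.hom ≫ i' → d ≫ eZ.hom = eY.hom ≫ d' → conf i d → conf i' d'
  id_isInflation : ∀ X : D, ∃ (Z : D) (d : X ⟶ Z), conf (𝟙 X) d
  id_isDeflation : ∀ X : D, ∃ (W : D) (i : W ⟶ X), conf i (𝟙 X)
  infl_comp : ∀ {X Y Z : D} (i : X ⟶ Y) (j : Y ⟶ Z),
    (∃ (W : D) (d : Y ⟶ W), conf i d) → (∃ (W : D) (d : Z ⟶ W), conf j d) →
    ∃ (W : D) (d : Z ⟶ W), conf (i ≫ j) d
  defl_comp : ∀ {X Y Z : D} (p : X ⟶ Y) (q : Y ⟶ Z),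
    (∃ (W : D) (i : W ⟶ X), conf i p) → (∃ (W : D) (i : W ⟶ Y), conf i q) →
    ∃ (W : D) (i : W ⟶ X), conf i (p ≫ q)
  infl_pushout : ∀ {X Y : D} (i : X ⟶ Y), (∃ (W : D) (d : Y ⟶ W), conf i d) →
    ∀ {A : D} (f : X ⟶ A), ∃ (B : D) (i' : A ⟶ B) (g : Y ⟶ B),
      (∃ (W : D) (d : B ⟶ W), conf i' d) ∧ IsPushout i f g i'
  defl_pullback : ∀ {Y Z : D} (p : Y ⟶ Z), (∃ (W : D) (i : W ⟶ Y), conf i p) →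
    ∀ {B : D} (f : B ⟶ Z), ∃ (A : D) (p' : A ⟶ B) (g : A ⟶ Y),
      (∃ (W : D) (i : W ⟶ A), conf i p') ∧ IsPullback g p' p f

/-- `i` is an inflation, i.e. the first map of some conflation. -/
def IsInflation (E : ConfClass C) {X Y : C} (i : X ⟶ Y) : Prop :=
  ∃ (Z : C) (d : Y ⟶ Z), E i d

/-- `d` is a deflation, i.e. the second map of some conflation. -/
def IsDeflation (E : ConfClass C) {Y Z : C} (d : Y ⟶ Z) : Prop :=
  ∃ (X : C) (i : X ⟶ Y), E i d

/-- `P` is a full additive subcategory: nonempty, closed under isomorphisms,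
finite sums and summands. -/
structure IsAddSubcat [HasBinaryBiproducts C] (P : Set C) : Prop where
  nonempty : P.Nonempty
  isoClosed : ∀ {X Y : C}, (X ≅ Y) → X ∈ P → Y ∈ P
  sumClosed : ∀ {X Y : C}, X ∈ P → Y ∈ P → (X ⊞ Y) ∈ P
  summandClosed : ∀ {X Y : C} (s : X ⟶ Y) (r : Y ⟶ X), s ≫ r = 𝟙 X → Y ∈ P → X ∈ P

/-- `f : Q ⟶ X` is a `P`-precover of `X`. -/
def IsPrecover (P : Set C) {Q X : C} (f : Q ⟶ X) : Prop :=
  Q ∈ P ∧ ∀ (Q' : C), Q' ∈ P → ∀ g : Q' ⟶ X, ∃ h : Q' ⟶ Q, h ≫ f = g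

/-- `f : X ⟶ Q` is a `P`-preenvelope of `X`. -/
def IsPreenvelope (P : Set C) {X Q : C} (f : X ⟶ Q) : Prop :=
  Q ∈ P ∧ ∀ (Q' : C), Q' ∈ P → ∀ g : X ⟶ Q', ∃ h : Q ⟶ Q', f ≫ h = g

/-- `P` is strongly contravariantly finite: every object has a `P`-precover
which is a deflation. -/
def StronglyContraFinite (E : ConfClass C) (P : Set C) : Prop :=
  ∀ X : C, ∃ (Q : C) (f : Q ⟶ X), IsPrecover P f ∧ IsDeflation E f

/-- `P` is strongly covariantly finite: every object has a `P`-preenvelope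
which is an inflation. -/
def StronglyCovFinite (E : ConfClass C) (P : Set C) : Prop :=
  ∀ X : C, ∃ (Q : C) (f : X ⟶ Q), IsPreenvelope P f ∧ IsInflation E f

/-- The pair `(i, d)` is `Hom(P,-)`-exact: for every `Q ∈ P`, the sequence
`0 → Hom(Q,X) → Hom(Q,Y) → Hom(Q,Z) → 0` is exact. -/
def HomCovExact (P : Set C) {X Y Z : C} (i : X ⟶ Y) (d : Y ⟶ Z) : Prop :=
  ∀ Q : C, Q ∈ P →
    (∀ g : Q ⟶ X, g ≫ i = 0 → g = 0) ∧
    (∀ u : Q ⟶ Y, u ≫ d = 0 → ∃ g : Q ⟶ X, g ≫ i = u) ∧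
    (∀ h : Q ⟶ Z, ∃ u : Q ⟶ Y, u ≫ d = h)

/-- The pair `(i, d)` is `Hom(-,P)`-exact: for every `Q ∈ P`, the sequence
`0 → Hom(Z,Q) → Hom(Y,Q) → Hom(X,Q) → 0` is exact. -/
def HomContraExact (P : Set C) {X Y Z : C} (i : X ⟶ Y) (d : Y ⟶ Z) : Prop :=
  ∀ Q : C, Q ∈ P →
    (∀ g : Z ⟶ Q, d ≫ g = 0 → g = 0) ∧
    (∀ u : Y ⟶ Q, i ≫ u = 0 → ∃ g : Z ⟶ Q, d ≫ g = u) ∧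
    (∀ h : X ⟶ Q, ∃ u : Y ⟶ Q, i ≫ u = h)

/-- Condition (▲): `P` is strongly covariantly finite and every `X` admits a conflation
`0 → X → Q₀ → Q₁ → 0` with `Q₀, Q₁ ∈ P` whose inflation is a `P`-preenvelope. -/
def CondEnv (E : ConfClass C) (P : Set C) : Prop :=
  StronglyCovFinite E P ∧
  ∀ X : C, ∃ (Q₀ Q₁ : C) (α : X ⟶ Q₀) (q : Q₀ ⟶ Q₁),
    E α q ∧ Q₀ ∈ P ∧ Q₁ ∈ P ∧ IsPreenvelope P α

/-- Condition (▼): `P` is strongly contravariantly finite and every `X` admits a conflation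
`0 → P₁ → P₀ → X → 0` with `P₀, P₁ ∈ P` whose deflation is a `P`-precover. -/
def CondCov (E : ConfClass C) (P : Set C) : Prop :=
  StronglyContraFinite E P ∧
  ∀ X : C, ∃ (P₀ P₁ : C) (i : P₁ ⟶ P₀) (β : P₀ ⟶ X),
    E i β ∧ P₀ ∈ P ∧ P₁ ∈ P ∧ IsPrecover P β

/-- `P` is a pseudo-cluster tilting subcategory. -/
def PseudoClusterTilting (E : ConfClass C) (P : Set C) : Prop :=
  CondEnv E P ∧ CondCov E P

/-- The conflation `(i, d)` splits. -/
def Splits {X Y Z : C} (i : X ⟶ Y) (d : Y ⟶ Z) : Prop :=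
  (∃ r : Y ⟶ X, i ≫ r = 𝟙 X) ∧ ∃ s : Z ⟶ Y, s ≫ d = 𝟙 Z

/-- `P` is self-orthogonal with respect to the class `cl` of conflations: every
conflation in `cl` with both end terms in `P` splits. -/
def SelfOrthWrt (P : Set C) (cl : ConfClass C) : Prop :=
  ∀ ⦃X Y Z : C⦄ (i : X ⟶ Y) (d : Y ⟶ Z), cl i d → X ∈ P → Z ∈ P → Splits i d

/-- `P` is a cluster tilting subcategory: a pseudo-cluster tilting subcategory which is
self-orthogonal with respect to all conflations. -/
def ClusterTilting (E : ConfClass C) (P : Set C) : Prop :=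
  PseudoClusterTilting E P ∧ SelfOrthWrt P E

/-- The class `𝒮` of conflations. -/
def memS (E : ConfClass C) (P : Set C) ⦃S₁ S₂ S₃ : C⦄ (i : S₁ ⟶ S₂) (d : S₂ ⟶ S₃) : Prop :=
  E i d ∧ ∃ (U M₁ M₂ : C) (u₁ : U ⟶ S₁) (p₁ : S₁ ⟶ M₁) (u₂ : U ⟶ S₂) (p₂ : S₂ ⟶ M₂)
    (m : M₁ ⟶ M₂) (q : M₂ ⟶ S₃),
    E u₁ p₁ ∧ E u₂ p₂ ∧ E m q ∧
    HomCovExact P u₂ p₂ ∧ HomContraExact P m q ∧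
    u₁ ≫ i = u₂ ∧ i ≫ p₂ = p₁ ≫ m ∧ d = p₂ ≫ q

/-- The class `𝒯` of conflations. -/
def memT (E : ConfClass C) (P : Set C) ⦃T₁ T₂ T₃ : C⦄ (i : T₁ ⟶ T₂) (d : T₂ ⟶ T₃) : Prop :=
  E i d ∧ ∃ (V N₂ N₃ : C) (n₁ : T₁ ⟶ N₂) (n₂ : N₂ ⟶ N₃) (j₂ : N₂ ⟶ T₂) (v₂ : T₂ ⟶ V)
    (j₃ : N₃ ⟶ T₃) (v₃ : T₃ ⟶ V),
    E n₁ n₂ ∧ E j₂ v₂ ∧ E j₃ v₃ ∧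
    HomCovExact P n₁ n₂ ∧ HomContraExact P j₂ v₂ ∧
    i = n₁ ≫ j₂ ∧ n₂ ≫ j₃ = j₂ ≫ d ∧ d ≫ v₃ = v₂

end Exact

section AbelianDefs

/-- A preadditive category is abelian (in the sense of Definition 2.1 of the paper) if it
has kernels and cokernels and the canonical morphism from the coimage to the image of any
morphism is an isomorphism. -/
def IsAbelianCat (D : Type*) [Category D] [Preadditive D] : Prop :=
  ∃ (hk : HasKernels D) (hc : HasCokernels D),
    ∀ {X Y : D} (f : X ⟶ Y),
      letI := hk; letI := hc; IsIso (CategoryTheory.Abelian.coimageImageComparison f)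

/-- A preadditive category is semi-abelian if it has kernels and cokernels and the
canonical morphism from the coimage to the image of any morphism is both an epimorphism
and a monomorphism. -/
def IsSemiAbelianCat (D : Type*) [Category D] [Preadditive D] : Prop :=
  ∃ (hk : HasKernels D) (hc : HasCokernels D),
    ∀ {X Y : D} (f : X ⟶ Y),
      letI := hk; letI := hc; Mono (CategoryTheory.Abelian.coimageImageComparison f) ∧
      Epi (CategoryTheory.Abelian.coimageImageComparison f)

end AbelianDefs

section ConflationCategory

variable {M : Type u} [Category.{v} M] [Preadditive M]

/-- Objects of the category `E(M)` of conflations: conflations `0 → X₁ → X₂ → X₃ → 0`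
of the exact category `(M, E)`. -/
structure ConfObj (E : ExactStructure M) : Type max u v where
  X₁ : M
  X₂ : M
  X₃ : M
  i : X₁ ⟶ X₂
  d : X₂ ⟶ X₃
  conf : E.conf i d

variable {E : ExactStructure M}

/-- The additive group of morphisms of conflations: triples of morphisms making the two
squares commute. -/
def confHomGroup (A B : ConfObj E) :
    AddSubgroup ((A.X₁ ⟶ B.X₁) × (A.X₂ ⟶ B.X₂) × (A.X₃ ⟶ B.X₃)) where
  carrier := {t | A.i ≫ t.2.1 = t.1 ≫ B.i ∧ A.d ≫ t.2.2 = t.2.1 ≫ B.d}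
  zero_mem' := by simp
  add_mem' := by
    rintro a b ⟨ha₁, ha₂⟩ ⟨hb₁, hb₂⟩
    refine ⟨?_, ?_⟩ <;>
      simp [Preadditive.comp_add, Preadditive.add_comp, ha₁, ha₂, hb₁, hb₂]
  neg_mem' := by
    rintro a ⟨h₁, h₂⟩
    refine ⟨?_, ?_⟩ <;> simp [h₁, h₂]

instance confCategoryStruct : CategoryStruct.{v} (ConfObj E) where
  Hom A B := ↥(confHomGroup A B)
  id A := ⟨(𝟙 _, 𝟙 _, 𝟙 _), by constructor <;> simp⟩
  comp {A B D} f g := ⟨(f.1.1 ≫ g.1.1, f.1.2.1 ≫ g.1.2.1, f.1.2.2 ≫ g.1.2.2), by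
    obtain ⟨hf₁, hf₂⟩ := f.2
    obtain ⟨hg₁, hg₂⟩ := g.2
    constructor
    · rw [← Category.assoc, hf₁, Category.assoc, hg₁, ← Category.assoc]
    · rw [← Category.assoc, hf₂, Category.assoc, hg₂, ← Category.assoc]⟩

/-- Degree `-1` component of a morphism of conflations. -/
def homC₁ {A B : ConfObj E} (f : A ⟶ B) : A.X₁ ⟶ B.X₁ := f.1.1

/-- Degree `0` component of a morphism of conflations. -/
def homC₂ {A B : ConfObj E} (f : A ⟶ B) : A.X₂ ⟶ B.X₂ := f.1.2.1

/-- Degree `1` component of a morphism of conflations. -/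
def homC₃ {A B : ConfObj E} (f : A ⟶ B) : A.X₃ ⟶ B.X₃ := f.1.2.2

lemma confHom_ext {A B : ConfObj E} {f g : A ⟶ B} (h₁ : homC₁ f = homC₁ g)
    (h₂ : homC₂ f = homC₂ g) (h₃ : homC₃ f = homC₃ g) : f = g := by
  apply Subtype.ext
  show (homC₁ f, homC₂ f, homC₃ f) = (homC₁ g, homC₂ g, homC₃ g)
  rw [h₁, h₂, h₃]

@[simp] lemma homC₁_id (A : ConfObj E) : homC₁ (𝟙 A) = 𝟙 A.X₁ := rfl
@[simp] lemma homC₂_id (A : ConfObj E) : homC₂ (𝟙 A) = 𝟙 A.X₂ := rfl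
@[simp] lemma homC₃_id (A : ConfObj E) : homC₃ (𝟙 A) = 𝟙 A.X₃ := rfl
@[simp] lemma homC₁_comp {A B D : ConfObj E} (f : A ⟶ B) (g : B ⟶ D) :
    homC₁ (f ≫ g) = homC₁ f ≫ homC₁ g := rfl
@[simp] lemma homC₂_comp {A B D : ConfObj E} (f : A ⟶ B) (g : B ⟶ D) :
    homC₂ (f ≫ g) = homC₂ f ≫ homC₂ g := rfl
@[simp] lemma homC₃_comp {A B D : ConfObj E} (f : A ⟶ B) (g : B ⟶ D) :
    homC₃ (f ≫ g) = homC₃ f ≫ homC₃ g := rfl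

instance confCategory : Category.{v} (ConfObj E) where
  id_comp f := confHom_ext (by simp) (by simp) (by simp)
  comp_id f := confHom_ext (by simp) (by simp) (by simp)
  assoc f g h := confHom_ext (by simp) (by simp) (by simp)

instance confHomAddCommGroup (A B : ConfObj E) : AddCommGroup (A ⟶ B) :=
  inferInstanceAs (AddCommGroup ↥(confHomGroup A B))

@[simp] lemma homC₁_add {A B : ConfObj E} (f g : A ⟶ B) :
    homC₁ (f + g) = homC₁ f + homC₁ g := rfl
@[simp] lemma homC₂_add {A B : ConfObj E} (f g : A ⟶ B) :
    homC₂ (f + g) = homC₂ f + homC₂ g := rfl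
@[simp] lemma homC₃_add {A B : ConfObj E} (f g : A ⟶ B) :
    homC₃ (f + g) = homC₃ f + homC₃ g := rfl

instance confPreadditive : Preadditive (ConfObj E) where
  homGroup A B := inferInstance
  add_comp A B D f f' g :=
    confHom_ext (by simp [Preadditive.add_comp]) (by simp [Preadditive.add_comp])
      (by simp [Preadditive.add_comp])
  comp_add A B D f g g' :=
    confHom_ext (by simp [Preadditive.comp_add]) (by simp [Preadditive.comp_add])
      (by simp [Preadditive.comp_add])

/-- The degree-wise class of conflations on `E(M)`: a short sequence of conflations is a
conflation if it is a conflation of `M` in each degree. -/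
def degConf (E : ExactStructure M) : ConfClass (ConfObj E) := fun _ _ _ f g =>
  E.conf (homC₁ f) (homC₁ g) ∧ E.conf (homC₂ f) (homC₂ g) ∧ E.conf (homC₃ f) (homC₃ g)

/-- The class `E₀`: degree-wise conflations splitting in degree `0`. -/
def degConf₀ (E : ExactStructure M) : ConfClass (ConfObj E) := fun _ _ _ f g =>
  degConf E f g ∧ Splits (homC₂ f) (homC₂ g)

/-- The class `E₀⁻¹`: degree-wise conflations splitting in degrees `-1` and `0`. -/
def degConf₀neg (E : ExactStructure M) : ConfClass (ConfObj E) := fun _ _ _ f g =>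
  degConf E f g ∧ Splits (homC₁ f) (homC₁ g) ∧ Splits (homC₂ f) (homC₂ g)

/-- The class `E₀¹`: degree-wise conflations splitting in degrees `0` and `1`. -/
def degConf₀pos (E : ExactStructure M) : ConfClass (ConfObj E) := fun _ _ _ f g =>
  degConf E f g ∧ Splits (homC₂ f) (homC₂ g) ∧ Splits (homC₃ f) (homC₃ g)

/-- The full subcategory `S(M)` of `E(M)` consisting of the split conflations. -/
def splitObjs (E : ExactStructure M) : Set (ConfObj E) :=
  {A | Splits A.i A.d}

end ConflationCategory

/-!
Choose a `𝒫`-preenvelope `α : X ⟶ Q` that is an inflation. The map `(f, -α) : X ⟶ Y ⊞ Q`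
is the composite of `(f, 𝟙) : X ⟶ Y ⊞ X`, a shear of the split inflation `inr`, with
`𝟙 ⊞ (-α)`, a pushout of the inflation `-α`; so it is an inflation, the first map of some
conflation. Applying `Hom(-, R)` to any conflation gives a left exact sequence; for `R ∈ 𝒫`
the last map is onto because every `X ⟶ R` already extends along the preenvelope `-α`.
-/

section Inflations

variable {M : Type u} [Category.{v} M] [Preadditive M] (E : ExactStructure M)

lemma isInflation_comp_iso {X Y Y' : M} {i : X ⟶ Y} (h : IsInflation E.conf i) (e : Y ≅ Y') :
    IsInflation E.conf (i ≫ e.hom) := by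
  obtain ⟨Z, d, hc⟩ := h
  exact ⟨Z, e.inv ≫ d, E.isoClosed (Iso.refl X) e (Iso.refl Z) (by simp) (by simp) hc⟩

lemma isInflation_neg {X Y : M} {i : X ⟶ Y} (h : IsInflation E.conf i) :
    IsInflation E.conf (-i) := by
  obtain ⟨Z, d, hc⟩ := h
  exact ⟨Z, d, E.isoClosed ⟨-𝟙 X, -𝟙 X, by simp, by simp⟩ (Iso.refl Y) (Iso.refl Z)
    (by simp) (by simp) hc⟩

lemma isInflation_of_isPushout {A B C D : M} {i : A ⟶ B} (hi : IsInflation E.conf i)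
    {f : A ⟶ C} {g : B ⟶ D} {i' : C ⟶ D} (h : IsPushout i f g i') :
    IsInflation E.conf i' := by
  obtain ⟨D', i'', g', hi'', h'⟩ := E.infl_pushout i hi f
  rw [← IsPushout.inr_isoIsPushout_hom _ _ h' h]
  exact isInflation_comp_iso E hi'' _

variable [HasBinaryBiproducts M]

lemma isPushout_zero_zero_inl_inr (W X Y : M) :
    IsPushout (0 : W ⟶ Y) (0 : W ⟶ X) biprod.inl (biprod.inr : X ⟶ Y ⊞ X) :=
  IsPushout.of_isColimit (PushoutCocone.IsColimit.mk (by simp)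
    (fun s => biprod.desc s.inl s.inr) (fun s => by simp) (fun s => by simp)
    (fun s m h₁ h₂ => by apply biprod.hom_ext' <;> simp [h₁, h₂]))

lemma isPushout_inr_biprod_map_id {A B : M} (i : A ⟶ B) (Y : M) :
    IsPushout i (biprod.inr : A ⟶ Y ⊞ A) biprod.inr (biprod.map (𝟙 Y) i) := by
  refine IsPushout.of_isColimit (PushoutCocone.IsColimit.mk (biprod.inr_map _ _).symm
    (fun s => biprod.desc (biprod.inl ≫ s.inr) s.inl) (fun s => by simp) ?_ ?_)
  · intro s
    apply biprod.hom_ext' <;> simp [s.condition]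
  · intro s m h₁ h₂
    apply biprod.hom_ext'
    · simpa using congrArg (biprod.inl ≫ ·) h₂
    · simpa using h₁

lemma isInflation_biprod_inr (X Y : M) : IsInflation E.conf (biprod.inr : X ⟶ Y ⊞ X) := by
  obtain ⟨W, j, hj⟩ := E.id_isDeflation Y
  have hj₀ : j = 0 := by simpa using (E.ker_of_conf hj).1
  subst hj₀
  exact isInflation_of_isPushout E ⟨Y, 𝟙 Y, hj⟩ (isPushout_zero_zero_inl_inr W X Y)

lemma isInflation_biprod_lift_id {X Y : M} (f : X ⟶ Y) :
    IsInflation E.conf (biprod.lift f (𝟙 X)) := by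
  have h : biprod.lift f (𝟙 X) = biprod.inr ≫ (Biprod.unipotentLower f).hom := by
    apply biprod.hom_ext <;> simp [Biprod.ofComponents]
  rw [h]
  exact isInflation_comp_iso E (isInflation_biprod_inr E X Y) _

lemma isInflation_biprod_lift {X Y Q : M} (f : X ⟶ Y) {β : X ⟶ Q}
    (hβ : IsInflation E.conf β) : IsInflation E.conf (biprod.lift f β) := by
  have h : biprod.lift f β = biprod.lift f (𝟙 X) ≫ biprod.map (𝟙 Y) β := by
    apply biprod.hom_ext <;> simp
  rw [h]
  exact E.infl_comp _ _ (isInflation_biprod_lift_id E f)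
    (isInflation_of_isPushout E hβ (isPushout_inr_biprod_map_id β Y))

end Inflations

section HomContraExact

variable {C : Type u} [Category.{v} C] [Preadditive C] {P : Set C}

lemma IsPreenvelope.neg {X Q : C} {α : X ⟶ Q} (hα : IsPreenvelope P α) :
    IsPreenvelope P (-α) := by
  refine ⟨hα.1, fun R hR g => ?_⟩
  obtain ⟨t, ht⟩ := hα.2 R hR g
  exact ⟨-t, by simpa using ht⟩

lemma IsPreenvelope.exists_biprod_lift_comp_eq [HasBinaryBiproducts C] {X Y Q R : C}
    {β : X ⟶ Q} (hβ : IsPreenvelope P β) (f : X ⟶ Y) (hR : R ∈ P) (h : X ⟶ R) :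
    ∃ u : Y ⊞ Q ⟶ R, biprod.lift f β ≫ u = h := by
  obtain ⟨t, ht⟩ := hβ.2 R hR h
  exact ⟨biprod.desc 0 t, by simpa using ht⟩

lemma homContraExact_of_isCokernelOf {X Y Z : C} {i : X ⟶ Y} {d : Y ⟶ Z}
    (hd : IsCokernelOf d i) (hext : ∀ R ∈ P, ∀ h : X ⟶ R, ∃ u : Y ⟶ R, i ≫ u = h) :
    HomContraExact P i d := by
  refine fun R hR => ⟨fun g hg => ?_, fun u hu => ?_, hext R hR⟩
  · obtain ⟨t, -, huniq⟩ := hd.2 (0 : Y ⟶ R) (by simp)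
    rw [huniq g hg, huniq 0 (by simp)]
  · obtain ⟨g, hg, -⟩ := hd.2 u hu
    exact ⟨g, hg⟩

end HomContraExact

theorem exists_homContraExact_conflation_general {M : Type u} [Category.{v} M] [Preadditive M]
    [HasBinaryBiproducts M] (E : ExactStructure M) (P : Set M)
    (hcov : StronglyCovFinite E.conf P) {X Y : M} (f : X ⟶ Y) :
    ∃ (Q Z : M), Q ∈ P ∧ ∃ (α : X ⟶ Q), IsPreenvelope P α ∧
      ∃ (d : Y ⊞ Q ⟶ Z), E.conf (biprod.lift f (-α)) d ∧
        HomContraExact P (biprod.lift f (-α)) d := by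
  obtain ⟨Q, α, hα, hinfl⟩ := hcov X
  obtain ⟨Z, d, hconf⟩ := isInflation_biprod_lift E f (isInflation_neg E hinfl)
  exact ⟨Q, Z, hα.1, α, hα, d, hconf, homContraExact_of_isCokernelOf (E.coker_of_conf hconf)
    fun R hR h => hα.neg.exists_biprod_lift_comp_eq f hR h⟩

/-- if `𝒫` is strongly covariantly finite, every morphism `f : X ⟶ Y` fits
into a conflation `0 → X → Y ⊕ Q → Z → 0` (with inflation of components `f` and `-α` for
a `𝒫`-preenvelope `α`) which is `Hom(-,𝒫)`-exact. -/
theorem exists_homContraExact_conflation {M : Type u} [Category.{v} M] [Preadditive M]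
    [HasBinaryBiproducts M] (E : ExactStructure M) (P : Set M) (hP : IsAddSubcat P)
    (hcov : StronglyCovFinite E.conf P) {X Y : M} (f : X ⟶ Y) :
    ∃ (Q Z : M), Q ∈ P ∧ ∃ (α : X ⟶ Q), IsPreenvelope P α ∧
      ∃ (d : Y ⊞ Q ⟶ Z), E.conf (biprod.lift f (-α)) d ∧
        HomContraExact P (biprod.lift f (-α)) d :=
  exists_homContraExact_conflation_general E P hcov f

end PaperQEC
end

section
/- Let (M, E) be an exact category and 𝒫 a full additive subcategory of M satisfying condition (▲). Then the quotient category M/𝒫 has cokernels: every morphism of M/𝒫 admits a cokernel. -/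
open CategoryTheory CategoryTheory.Limits

universe v u

namespace PaperQEC

/-!
Let `f : A ⟶ B` be a morphism of `M`, and let `0 → A →α Q₀ →q Q₁ → 0` be the conflation given
by (▲). Pushing out the inflation `α` along `f` gives `ι : B ⟶ B'`, and `[ι]` is a cokernel of
`[f]` in `M/𝒫`. The composite `f ≫ ι` factors through `Q₀`. A morphism `t` out of `B` with
`f ≫ t` factoring through some `Z ∈ 𝒫` extends along `ι`, because the map `A ⟶ Z` extends along
the preenvelope `α` and the pushout glues the two. Finally `[ι]` is an epimorphism: if `ι ≫ t`
factors through `𝒫`, then after subtracting an extension of that factorization, what remains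
vanishes on `B`, and so it factors through the map `B' ⟶ Q₁` induced by `q`, a cokernel of `ι`.
-/

section FactorIdeal

variable {C : Type u} [Category.{v} C] [Preadditive C] {P : Set C}

lemma FactorsThru.mem_factorIdeal {X Y : C} {f : X ⟶ Y} (hf : FactorsThru P f) :
    f ∈ factorIdeal P X Y :=
  AddSubgroup.subset_closure hf

lemma IsAddSubcat.factorsThru_of_mem_factorIdeal [HasBinaryBiproducts C] (hP : IsAddSubcat P)
    {X Y : C} {f : X ⟶ Y} (hf : f ∈ factorIdeal P X Y) : FactorsThru P f := by
  let S : AddSubgroup (X ⟶ Y) :=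
    { carrier := {u | FactorsThru P u}
      zero_mem' := by
        obtain ⟨Z, hZ⟩ := hP.nonempty
        exact ⟨Z, hZ, 0, 0, by simp⟩
      add_mem' := by
        rintro _ _ ⟨Z₁, hZ₁, a₁, b₁, rfl⟩ ⟨Z₂, hZ₂, a₂, b₂, rfl⟩
        exact ⟨Z₁ ⊞ Z₂, hP.sumClosed hZ₁ hZ₂, biprod.lift a₁ a₂, biprod.desc b₁ b₂,
          biprod.lift_desc⟩
      neg_mem' := by
        rintro _ ⟨Z, hZ, a, b, rfl⟩
        exact ⟨Z, hZ, -a, b, Preadditive.neg_comp _ _⟩ }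
  exact (AddSubgroup.closure_le S).mpr (fun _ hu => hu) hf

variable (P)

lemma qmap_comp {X Y Z : C} (a : X ⟶ Y) (b : Y ⟶ Z) :
    qmap P a ≫ qmap P b = qmap P (a ≫ b) :=
  rfl

lemma qmap_eq_zero_iff {X Y : C} (a : X ⟶ Y) : qmap P a = 0 ↔ a ∈ factorIdeal P X Y :=
  QuotientAddGroup.eq_zero_iff a

lemma qmap_surjective {X : C} {T : QuotObj P} (φ : QuotObj.mk X ⟶ T) :
    ∃ t : X ⟶ T.obj, qmap P t = φ :=
  QuotientAddGroup.mk_surjective φ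

end FactorIdeal

end PaperQEC

namespace CategoryTheory.IsPushout

open PaperQEC

variable {C : Type u} [Category.{v} C] {P : Set C}
  {A B Q₀ Q₁ B' : C} {α : A ⟶ Q₀} {q : Q₀ ⟶ Q₁} {f : A ⟶ B} {g : Q₀ ⟶ B'} {ι : B ⟶ B'}

lemma exists_inr_comp_eq_of_factorsThru (hα : IsPreenvelope P α) (hpo : IsPushout α f g ι)
    {T : C} {t : B ⟶ T} (ht : FactorsThru P (f ≫ t)) : ∃ m : B' ⟶ T, ι ≫ m = t := by
  obtain ⟨Z, hZ, a, b, hab⟩ := ht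
  obtain ⟨a', ha'⟩ := hα.2 Z hZ a
  exact ⟨hpo.desc (a' ≫ b) t (by rw [← Category.assoc, ha', hab]), hpo.inr_desc _ _ _⟩

variable [Preadditive C]

lemma factorsThru_of_inr_comp_eq_zero (hq : IsCokernelOf q α) (hQ₁ : Q₁ ∈ P)
    (hpo : IsPushout α f g ι) {T : C} {s : B' ⟶ T} (hs : ι ≫ s = 0) : FactorsThru P s := by
  have hαq : α ≫ q = f ≫ 0 := by rw [hq.1, Limits.comp_zero]
  obtain ⟨r, hr, -⟩ := hq.2 (g ≫ s) (by rw [← Category.assoc, hpo.w, Category.assoc, hs,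
    Limits.comp_zero])
  refine ⟨Q₁, hQ₁, hpo.desc q 0 hαq, r, hpo.hom_ext ?_ ?_⟩
  · rw [← Category.assoc, hpo.inl_desc, hr]
  · rw [← Category.assoc, hpo.inr_desc, Limits.zero_comp, hs]

lemma mem_factorIdeal_of_inr_comp_mem [HasBinaryBiproducts C] (hP : IsAddSubcat P)
    (hα : IsPreenvelope P α) (hq : IsCokernelOf q α) (hQ₁ : Q₁ ∈ P) (hpo : IsPushout α f g ι)
    {T : C} {t : B' ⟶ T} (ht : ι ≫ t ∈ factorIdeal P B T) : t ∈ factorIdeal P B' T := by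
  obtain ⟨Z, hZ, u, v, huv⟩ := hP.factorsThru_of_mem_factorIdeal ht
  obtain ⟨u', hu'⟩ :=
    hpo.exists_inr_comp_eq_of_factorsThru hα ⟨Z, hZ, f ≫ u, 𝟙 Z, Category.comp_id _⟩
  have hs : ι ≫ (t - u' ≫ v) = 0 := by
    rw [Preadditive.comp_sub, ← Category.assoc, hu', huv, sub_self]
  rw [← add_sub_cancel (u' ≫ v) t]
  exact add_mem (FactorsThru.mem_factorIdeal ⟨Z, hZ, u', v, rfl⟩)
    (hpo.factorsThru_of_inr_comp_eq_zero hq hQ₁ hs).mem_factorIdeal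

lemma qmap_comp_qmap_inr (hα : IsPreenvelope P α) (hpo : IsPushout α f g ι) :
    qmap P f ≫ qmap P ι = 0 := by
  rw [qmap_comp, qmap_eq_zero_iff, ← hpo.w]
  exact FactorsThru.mem_factorIdeal ⟨Q₀, hα.1, α, g, rfl⟩

variable [HasBinaryBiproducts C]

lemma exists_qmap_inr_comp_eq (hP : IsAddSubcat P) (hα : IsPreenvelope P α)
    (hpo : IsPushout α f g ι) {T : QuotObj P} (k : QuotObj.mk B ⟶ T)
    (hk : qmap P f ≫ k = 0) : ∃ l : QuotObj.mk B' ⟶ T, qmap P ι ≫ l = k := by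
  obtain ⟨t, rfl⟩ := qmap_surjective P k
  rw [qmap_comp, qmap_eq_zero_iff] at hk
  obtain ⟨m, hm⟩ :=
    hpo.exists_inr_comp_eq_of_factorsThru hα (hP.factorsThru_of_mem_factorIdeal hk)
  exact ⟨qmap P m, by rw [qmap_comp, hm]⟩

lemma epi_qmap_inr (hP : IsAddSubcat P) (hα : IsPreenvelope P α) (hq : IsCokernelOf q α)
    (hQ₁ : Q₁ ∈ P) (hpo : IsPushout α f g ι) : Epi (qmap P ι) := by
  refine Preadditive.epi_of_cancel_zero _ fun {T} l hl => ?_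
  obtain ⟨t, rfl⟩ := qmap_surjective P l
  rw [qmap_comp, qmap_eq_zero_iff] at hl
  exact (qmap_eq_zero_iff P t).mpr (hpo.mem_factorIdeal_of_inr_comp_mem hP hα hq hQ₁ hl)

noncomputable def isColimitCokernelCoforkQmapInr (hP : IsAddSubcat P) (hα : IsPreenvelope P α)
    (hq : IsCokernelOf q α) (hQ₁ : Q₁ ∈ P) (hpo : IsPushout α f g ι) :
    IsColimit (CokernelCofork.ofπ (qmap P ι) (hpo.qmap_comp_qmap_inr hα)) :=
  haveI := hpo.epi_qmap_inr hP hα hq hQ₁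
  CokernelCofork.IsColimit.ofπ' _ _ fun k hk =>
    ⟨_, (hpo.exists_qmap_inr_comp_eq hP hα k hk).choose_spec⟩

end CategoryTheory.IsPushout

namespace PaperQEC

/-- if `𝒫` satisfies condition (▲), the quotient category `M/𝒫` has
cokernels. -/
theorem quotient_hasCokernels {M : Type u} [Category.{v} M] [Preadditive M]
    [HasBinaryBiproducts M] (E : ExactStructure M) (P : Set M) (hP : IsAddSubcat P)
    (h : CondEnv E.conf P) :
    HasCokernels (QuotObj P) := by
  refine ⟨fun {A B} φ => ?_⟩
  obtain ⟨f, rfl⟩ := qmap_surjective P φ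
  obtain ⟨Q₀, Q₁, α, q, hconf, -, hQ₁, hα⟩ := h.2 A.obj
  obtain ⟨B', ι, g, -, hpo⟩ := E.infl_pushout α ⟨Q₁, q, hconf⟩ f
  exact HasColimit.mk ⟨_, hpo.isColimitCokernelCoforkQmapInr hP hα (E.coker_of_conf hconf) hQ₁⟩

end PaperQEC
end
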